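/- Suppose n ≥ 2 and f, g: {1,...,n−1} → {→, ←, ⇠} agree on all i with f(i) ≠ ←. If a variety V realizes the pattern path associated to f by a sequence s₁,...,sₙ in its free algebra F₂ such that sᵢ ⇢ sⱼ for every i ≤ j ≤ n, then V realizes the pattern path associated to g. In other words, given all dashed right arrows between pairs of vertices, any set of solid left arrows in the path can be turned into solid right arrows. -/
import Mathlib


/-- A signature: a type of operation symbols with arities. -/
structure Sgn where
  ops : Type
  arity : ops → ℕ

/-- Terms over a signature with variables from `V`. -/
inductive Trm (S : Sgn) (V : Type) : Type
  | var : V → Trm S V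
  | op : (f : S.ops) → (Fin (S.arity f) → Trm S V) → Trm S V

/-- An algebra for a signature. -/
structure Alg (S : Sgn) where
  carrier : Type
  interp : (f : S.ops) → (Fin (S.arity f) → carrier) → carrier

/-- Evaluation of a term in an algebra under an assignment. -/
def Trm.eval {S : Sgn} {V : Type} (A : Alg S) (asgn : V → A.carrier) :
    Trm S V → A.carrier
  | .var v => asgn v
  | .op f args => A.interp f (fun i => (args i).eval A asgn)

/-- The identity `t ≈ u` holds throughout the class (variety) `K`. -/
def HoldsIn {S : Sgn} {V : Type} (K : Set (Alg S)) (t u : Trm S V) : Prop :=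
  ∀ A ∈ K, ∀ asgn : V → A.carrier, t.eval A asgn = u.eval A asgn

/-- Substitution of terms for variables. -/
def Trm.subst {S : Sgn} {V W : Type} (σ : V → Trm S W) : Trm S V → Trm S W
  | .var v => σ v
  | .op f args => .op f (fun i => (args i).subst σ)

/-- Every basic operation is idempotent throughout `K`. -/
def IdemK {S : Sgn} (K : Set (Alg S)) : Prop :=
  ∀ A ∈ K, ∀ (f : S.ops) (a : A.carrier), A.interp f (fun _ => a) = a

abbrev T3 (S : Sgn) := Trm S (Fin 3)
abbrev T2 (S : Sgn) := Trm S (Fin 2)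

def x3 {S : Sgn} : T3 S := .var 0
def y3 {S : Sgn} : T3 S := .var 1
def z3 {S : Sgn} : T3 S := .var 2

/-- The generator x̄ of the free algebra on two generators (terms as representatives). -/
def xF {S : Sgn} : T2 S := .var 0
/-- The generator z̄. -/
def zF {S : Sgn} : T2 S := .var 1

/-- `app3 t a b c` is the term `t(a,b,c)`. -/
def app3 {S : Sgn} {V : Type} (t : T3 S) (a b c : Trm S V) : Trm S V :=
  t.subst ![a, b, c]

/-- The binary term `ŝ(x,z)` viewed as a ternary term (not depending on `y`). -/
def bin3 {S : Sgn} (s : T2 S) : T3 S := s.subst ![x3, z3]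

/-- `sub2 s a b` is `s̄(a,b)`, the composition of binary terms. -/
def sub2 {S : Sgn} (s a b : T2 S) : T2 S := s.subst ![a, b]

/-- Dashed arrow `s ⇢ r`. -/
def DashedTo {S : Sgn} (K : Set (Alg S)) (s r : T2 S) : Prop :=
  ∃ t : T3 S, HoldsIn K (bin3 s) (app3 t x3 x3 z3) ∧ HoldsIn K (app3 t x3 z3 z3) (bin3 r)

/-- Solid arrow `s → r`. -/
def SolidTo {S : Sgn} (K : Set (Alg S)) (s r : T2 S) : Prop :=
  ∃ t : T3 S, HoldsIn K (bin3 s) (app3 t x3 x3 z3) ∧ HoldsIn K (app3 t x3 z3 z3) (bin3 r) ∧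
    HoldsIn K (app3 t x3 y3 x3) x3

/-- Edge labels for pattern paths: `→`, `←`, `⇠`. -/
inductive ArrowType | right | left | dashedLeft

/-- The relation on `F₂` associated to an edge label. -/
def ArrowRel {S : Sgn} (K : Set (Alg S)) : ArrowType → T2 S → T2 S → Prop
  | .right => SolidTo K
  | .left => fun a b => SolidTo K b a
  | .dashedLeft => fun a b => DashedTo K b a

/-- The sequence `s₁,…,sₙ` realizes the pattern path associated to `f`,
with `s₁ = x̄` and `sₙ = z̄`. -/
def RealizesWith {S : Sgn} (K : Set (Alg S)) (f : ℕ → ArrowType) (n : ℕ)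
    (s : ℕ → T2 S) : Prop :=
  s 1 = xF ∧ s n = zF ∧ ∀ i, 1 ≤ i → i < n → ArrowRel K (f i) (s i) (s (i+1))

section Aux

variable {S : Sgn}

instance : DecidableEq ArrowType := fun a b => by
  cases a <;> cases b <;> first | exact isTrue rfl | exact isFalse nofun

/-- Evaluation commutes with substitution. -/
lemma eval_subst {V W : Type} (A : Alg S) (σ : V → Trm S W) (asgn : W → A.carrier) :
    ∀ t : Trm S V, (t.subst σ).eval A asgn = t.eval A (fun v => (σ v).eval A asgn)
  | .var v => rfl
  | .op f args => by
      simp only [Trm.subst, Trm.eval]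
      congr 1
      funext i
      exact eval_subst A σ asgn (args i)

/-- All terms are idempotent in an idempotent class. -/
lemma eval_idem {K : Set (Alg S)} (hid : IdemK K) {A : Alg S} (hA : A ∈ K)
    {V : Type} (a : A.carrier) : ∀ t : Trm S V, t.eval A (fun _ => a) = a
  | .var _ => rfl
  | .op f args => by
      simp only [Trm.eval]
      have h1 : (fun i => (args i).eval A (fun _ => a)) = fun _ => a := by
        funext i; exact eval_idem hid hA a (args i)
      rw [h1]
      exact hid A hA f a

/-- Binary evaluation helper. -/
def E2 (A : Alg S) (s : T2 S) (p r : A.carrier) : A.carrier := s.eval A ![p, r]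

/-- Ternary evaluation helper. -/
def E3 (A : Alg S) (t : T3 S) (p q r : A.carrier) : A.carrier := t.eval A ![p, q, r]

@[simp] lemma eval_x3 (A : Alg S) (asgn : Fin 3 → A.carrier) :
    (x3 : T3 S).eval A asgn = asgn 0 := rfl
@[simp] lemma eval_y3 (A : Alg S) (asgn : Fin 3 → A.carrier) :
    (y3 : T3 S).eval A asgn = asgn 1 := rfl
@[simp] lemma eval_z3 (A : Alg S) (asgn : Fin 3 → A.carrier) :
    (z3 : T3 S).eval A asgn = asgn 2 := rfl

lemma eval_bin3 (A : Alg S) (asgn : Fin 3 → A.carrier) (s : T2 S) :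
    (bin3 s).eval A asgn = E2 A s (asgn 0) (asgn 2) := by
  show (s.subst ![x3, z3]).eval A asgn = _
  rw [eval_subst]
  unfold E2
  congr 1
  funext v
  fin_cases v <;> rfl

lemma eval_app3 {V : Type} (A : Alg S) (asgn : V → A.carrier) (t : T3 S) (a b c : Trm S V) :
    (app3 t a b c).eval A asgn = E3 A t (a.eval A asgn) (b.eval A asgn) (c.eval A asgn) := by
  show (t.subst ![a, b, c]).eval A asgn = _
  rw [eval_subst]
  unfold E3
  congr 1
  funext v
  fin_cases v <;> rfl

lemma E3_app3 (A : Alg S) (W α β γ : T3 S) (p q r : A.carrier) :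
    E3 A (app3 W α β γ) p q r
      = E3 A W (E3 A α p q r) (E3 A β p q r) (E3 A γ p q r) := by
  show (app3 W α β γ).eval A ![p, q, r] = _
  rw [eval_app3]
  rfl

lemma E3_bin3 (A : Alg S) (s : T2 S) (p q r : A.carrier) :
    E3 A (bin3 s) p q r = E2 A s p r := by
  show (bin3 s).eval A ![p, q, r] = _
  rw [eval_bin3]
  rfl

lemma E2_sub2 (A : Alg S) (s c d : T2 S) (p r : A.carrier) :
    E2 A (sub2 s c d) p r = E2 A s (E2 A c p r) (E2 A d p r) := by
  show (s.subst ![c, d]).eval A ![p, r] = _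
  rw [eval_subst]
  unfold E2
  congr 1
  funext v
  fin_cases v <;> rfl

lemma E2_idem {K : Set (Alg S)} (hid : IdemK K) {A : Alg S} (hA : A ∈ K)
    (s : T2 S) (p : A.carrier) : E2 A s p p = p := by
  unfold E2
  have h1 : (![p, p] : Fin 2 → A.carrier) = fun _ => p := by
    funext v; fin_cases v <;> rfl
  rw [h1]
  exact eval_idem hid hA p s

lemma pt1 {K : Set (Alg S)} {s : T2 S} {t : T3 S}
    (h : HoldsIn K (bin3 s) (app3 t x3 x3 z3)) {A : Alg S} (hA : A ∈ K) (p r : A.carrier) :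
    E2 A s p r = E3 A t p p r := by
  have h2 := h A hA ![p, p, r]
  rwa [eval_bin3, eval_app3, eval_x3, eval_z3] at h2

lemma pt2 {K : Set (Alg S)} {r : T2 S} {t : T3 S}
    (h : HoldsIn K (app3 t x3 z3 z3) (bin3 r)) {A : Alg S} (hA : A ∈ K) (p q : A.carrier) :
    E3 A t p q q = E2 A r p q := by
  have h2 := h A hA ![p, p, q]
  rwa [eval_bin3, eval_app3, eval_x3, eval_z3] at h2

lemma pt3 {K : Set (Alg S)} {t : T3 S}
    (h : HoldsIn K (app3 t x3 y3 x3) x3) {A : Alg S} (hA : A ∈ K) (p q : A.carrier) :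
    E3 A t p q p = p := by
  have h2 := h A hA ![p, q, p]
  rwa [eval_app3, eval_x3, eval_y3] at h2

lemma solid_to_dashed {K : Set (Alg S)} {s r : T2 S} (h : SolidTo K s r) :
    DashedTo K s r := by
  obtain ⟨t, h1, h2, _⟩ := h
  exact ⟨t, h1, h2⟩

lemma dashed_refl (K : Set (Alg S)) (s : T2 S) : DashedTo K s s := by
  refine ⟨bin3 s, ?_, ?_⟩ <;>
  · intro A hA asgn
    rw [eval_bin3, eval_app3, eval_x3, eval_z3, E3_bin3]

lemma solid_refl {K : Set (Alg S)} (hid : IdemK K) (s : T2 S) : SolidTo K s s := by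
  refine ⟨bin3 s, ?_, ?_, ?_⟩
  · intro A hA asgn
    rw [eval_bin3, eval_app3, eval_x3, eval_z3, E3_bin3]
  · intro A hA asgn
    rw [eval_bin3, eval_app3, eval_x3, eval_z3, E3_bin3]
  · intro A hA asgn
    rw [eval_app3, eval_x3, eval_y3, E3_bin3]
    exact E2_idem hid hA s (asgn 0)

/-- Transfer of dashed arrows along compositions. -/
lemma dash_transfer {K : Set (Alg S)} {P Q c c' d d' : T2 S}
    (hPQ : DashedTo K P Q) (hcc : DashedTo K c c') (hcd : DashedTo K c d')
    (hdd : DashedTo K d d') : DashedTo K (sub2 P c d) (sub2 Q c' d') := by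
  obtain ⟨W, hW1, hW2⟩ := hPQ
  obtain ⟨α, ha1, ha2⟩ := hcc
  obtain ⟨β, hb1, hb2⟩ := hcd
  obtain ⟨γ, hg1, hg2⟩ := hdd
  refine ⟨app3 W α β γ, ?_, ?_⟩
  · intro A hA asgn
    rw [eval_bin3, E2_sub2, eval_app3, eval_x3, eval_z3, E3_app3]
    rw [← pt1 ha1 hA, ← pt1 hb1 hA, ← pt1 hg1 hA]
    exact pt1 hW1 hA _ _
  · intro A hA asgn
    rw [eval_bin3, E2_sub2, eval_app3, eval_x3, eval_z3, E3_app3]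
    rw [pt2 ha2 hA, pt2 hb2 hA, pt2 hg2 hA]
    exact pt2 hW2 hA _ _

/-- Transfer of solid arrows along compositions. -/
lemma solid_transfer {K : Set (Alg S)} {P Q c c' d d' : T2 S}
    (hPQ : SolidTo K P Q) (hcc : SolidTo K c c') (hcd : DashedTo K c d')
    (hdd : SolidTo K d d') : SolidTo K (sub2 P c d) (sub2 Q c' d') := by
  obtain ⟨W, hW1, hW2, hW3⟩ := hPQ
  obtain ⟨α, ha1, ha2, ha3⟩ := hcc
  obtain ⟨β, hb1, hb2⟩ := hcd
  obtain ⟨γ, hg1, hg2, hg3⟩ := hdd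
  refine ⟨app3 W α β γ, ?_, ?_, ?_⟩
  · intro A hA asgn
    rw [eval_bin3, E2_sub2, eval_app3, eval_x3, eval_z3, E3_app3]
    rw [← pt1 ha1 hA, ← pt1 hb1 hA, ← pt1 hg1 hA]
    exact pt1 hW1 hA _ _
  · intro A hA asgn
    rw [eval_bin3, E2_sub2, eval_app3, eval_x3, eval_z3, E3_app3]
    rw [pt2 ha2 hA, pt2 hb2 hA, pt2 hg2 hA]
    exact pt2 hW2 hA _ _
  · intro A hA asgn
    rw [eval_app3, eval_x3, eval_y3, E3_app3]
    rw [pt3 ha3 hA, pt3 hg3 hA]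
    exact pt3 hW3 hA _ _

/-- The key flip: a solid arrow `Q → P` yields a solid arrow
`P(P,Q) → Q(P,Q)`. -/
lemma flip_solid {K : Set (Alg S)} (hid : IdemK K) {P Q : T2 S} (h : SolidTo K Q P) :
    SolidTo K (sub2 P P Q) (sub2 Q P Q) := by
  obtain ⟨W, h1, h2, h3⟩ := h
  refine ⟨app3 W (bin3 P) W (bin3 Q), ?_, ?_, ?_⟩
  · intro A hA asgn
    rw [eval_bin3, E2_sub2, eval_app3, eval_x3, eval_z3, E3_app3, E3_bin3, E3_bin3]
    rw [← pt1 h1 hA]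
    exact (pt2 h2 hA _ _).symm
  · intro A hA asgn
    rw [eval_bin3, E2_sub2, eval_app3, eval_x3, eval_z3, E3_app3, E3_bin3, E3_bin3]
    rw [pt2 h2 hA]
    exact (pt1 h1 hA _ _).symm
  · intro A hA asgn
    rw [eval_app3, eval_x3, eval_y3, E3_app3, E3_bin3, E3_bin3]
    rw [E2_idem hid hA, E2_idem hid hA, pt3 h3 hA]

lemma sub2_xF (c d : T2 S) : sub2 xF c d = c := rfl
lemma sub2_zF (c d : T2 S) : sub2 zF c d = d := rfl

@[simp] lemma arrowRel_right (K : Set (Alg S)) (a b : T2 S) :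
    ArrowRel K ArrowType.right a b = SolidTo K a b := rfl
@[simp] lemma arrowRel_left (K : Set (Alg S)) (a b : T2 S) :
    ArrowRel K ArrowType.left a b = SolidTo K b a := rfl
@[simp] lemma arrowRel_dashedLeft (K : Set (Alg S)) (a b : T2 S) :
    ArrowRel K ArrowType.dashedLeft a b = DashedTo K b a := rfl

end Aux

theorem turn_aux {S : Sgn} (K : Set (Alg S)) (hid : IdemK K)
    (n : ℕ) (g : ℕ → ArrowType) :
    ∀ (k : ℕ) (f : ℕ → ArrowType) (s : ℕ → T2 S),
      ((Finset.Ico 1 n).filter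
        (fun i => f i = ArrowType.left ∧ g i ≠ ArrowType.left)).card ≤ k →
      (∀ i, 1 ≤ i → i < n → f i ≠ ArrowType.left → g i = f i) →
      RealizesWith K f n s →
      (∀ i j, 1 ≤ i → i ≤ j → j ≤ n → DashedTo K (s i) (s j)) →
      ∃ s' : ℕ → T2 S, RealizesWith K g n s' := by
  intro k
  induction k with
  | zero =>
      intro f s hcard hfg hreal hdash
      refine ⟨s, hreal.1, hreal.2.1, ?_⟩
      intro i hi1 hi2
      by_cases hf : f i = ArrowType.left
      · have hg : g i = ArrowType.left := by
          by_contra hg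
          have hmem : i ∈ (Finset.Ico 1 n).filter
              (fun i => f i = ArrowType.left ∧ g i ≠ ArrowType.left) := by
            simp only [Finset.mem_filter, Finset.mem_Ico]
            exact ⟨⟨hi1, hi2⟩, hf, hg⟩
          have := Finset.card_pos.mpr ⟨i, hmem⟩
          omega
        have hge : g i = f i := by rw [hg, hf]
        rw [hge]; exact hreal.2.2 i hi1 hi2
      · rw [hfg i hi1 hi2 hf]; exact hreal.2.2 i hi1 hi2
  | succ k ih =>
      intro f s hcard hfg hreal hdash
      by_cases hex : ∃ i₀, (1 ≤ i₀ ∧ i₀ < n) ∧ f i₀ = ArrowType.left ∧ g i₀ ≠ ArrowType.left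
      · obtain ⟨i₀, ⟨hi₀1, hi₀2⟩, hfi₀, hgi₀⟩ := hex
        have hi₀n : i₀ + 1 ≤ n := hi₀2
        have ht₀ : SolidTo K (s (i₀+1)) (s i₀) := by
          have h := hreal.2.2 i₀ hi₀1 hi₀2
          rwa [hfi₀, arrowRel_left] at h
        -- measure decreases
        have hmem : i₀ ∈ (Finset.Ico 1 n).filter
            (fun i => f i = ArrowType.left ∧ g i ≠ ArrowType.left) := by
          simp only [Finset.mem_filter, Finset.mem_Ico]
          exact ⟨⟨hi₀1, hi₀2⟩, hfi₀, hgi₀⟩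
        have hcard' : ((Finset.Ico 1 n).filter
            (fun i => (if i = i₀ then g i₀ else f i) = ArrowType.left
              ∧ g i ≠ ArrowType.left)).card ≤ k := by
          have hsub : (Finset.Ico 1 n).filter
              (fun i => (if i = i₀ then g i₀ else f i) = ArrowType.left
                ∧ g i ≠ ArrowType.left)
              ⊆ ((Finset.Ico 1 n).filter
                (fun i => f i = ArrowType.left ∧ g i ≠ ArrowType.left)).erase i₀ := by
            intro i hi
            rw [Finset.mem_filter] at hi
            have hne : i ≠ i₀ := by
              rintro rfl
              rw [if_pos rfl] at hi
              exact hi.2.2 hi.2.1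
            rw [if_neg hne] at hi
            rw [Finset.mem_erase, Finset.mem_filter]
            exact ⟨hne, hi.1, hi.2⟩
          have h1 := Finset.card_le_card hsub
          have h2 := Finset.card_erase_of_mem hmem
          omega
        have hfg' : ∀ i, 1 ≤ i → i < n →
            (if i = i₀ then g i₀ else f i) ≠ ArrowType.left →
            g i = (if i = i₀ then g i₀ else f i) := by
          intro i hi1 hi2 hne
          by_cases h : i = i₀
          · subst h; rw [if_pos rfl]
          · rw [if_neg h] at hne ⊢; exact hfg i hi1 hi2 hne
        have hreal' : RealizesWith K (fun i => if i = i₀ then g i₀ else f i) n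
            (fun j => sub2 (s j) (s (min j i₀)) (s (max j (i₀+1)))) := by
          refine ⟨?_, ?_, ?_⟩
          · show sub2 (s 1) (s (min 1 i₀)) (s (max 1 (i₀+1))) = xF
            rw [hreal.1, sub2_xF, min_eq_left hi₀1]
            exact hreal.1
          · show sub2 (s n) (s (min n i₀)) (s (max n (i₀+1))) = zF
            rw [hreal.2.1, sub2_zF, max_eq_left hi₀n]
            exact hreal.2.1
          · intro i hi1 hi2
            show ArrowRel K (if i = i₀ then g i₀ else f i)
              (sub2 (s i) (s (min i i₀)) (s (max i (i₀+1))))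
              (sub2 (s (i+1)) (s (min (i+1) i₀)) (s (max (i+1) (i₀+1))))
            rcases Nat.lt_trichotomy i i₀ with hlt | rfl | hgt
            · rw [if_neg (by omega : ¬ i = i₀), min_eq_left (by omega : i ≤ i₀),
                max_eq_right (by omega : i ≤ i₀+1),
                min_eq_left (by omega : i+1 ≤ i₀),
                max_eq_right (by omega : i+1 ≤ i₀+1)]
              have hedge := hreal.2.2 i hi1 hi2
              cases hfi : f i with
              | right =>
                  rw [hfi] at hedge
                  exact solid_transfer hedge hedge
                    (hdash i (i₀+1) hi1 (by omega) hi₀n) (solid_refl hid _)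
              | left =>
                  rw [hfi] at hedge
                  exact solid_transfer hedge hedge
                    (hdash (i+1) (i₀+1) (by omega) (by omega) hi₀n) (solid_refl hid _)
              | dashedLeft =>
                  rw [hfi] at hedge
                  exact dash_transfer hedge hedge
                    (hdash (i+1) (i₀+1) (by omega) (by omega) hi₀n) (dashed_refl K _)
            · rw [if_pos rfl, min_self, max_eq_right (Nat.le_succ i),
                min_eq_right (Nat.le_succ i), max_self]
              cases hg : g i with
              | right =>
                  exact flip_solid hid ht₀
              | left =>
                  exact absurd hg hgi₀
              | dashedLeft =>
                  exact dash_transfer (solid_to_dashed ht₀) (dashed_refl K _)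
                    (hdash i (i+1) hi1 (Nat.le_succ i) hi₀n) (dashed_refl K _)
            · rw [if_neg (by omega : ¬ i = i₀), min_eq_right (by omega : i₀ ≤ i),
                max_eq_left (by omega : i₀+1 ≤ i),
                min_eq_right (by omega : i₀ ≤ i+1),
                max_eq_left (by omega : i₀+1 ≤ i+1)]
              have hedge := hreal.2.2 i hi1 hi2
              cases hfi : f i with
              | right =>
                  rw [hfi] at hedge
                  exact solid_transfer hedge (solid_refl hid _)
                    (hdash i₀ (i+1) hi₀1 (by omega) (by omega)) hedge
              | left =>
                  rw [hfi] at hedge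
                  exact solid_transfer hedge (solid_refl hid _)
                    (hdash i₀ i hi₀1 (by omega) (by omega)) hedge
              | dashedLeft =>
                  rw [hfi] at hedge
                  exact dash_transfer hedge (dashed_refl K _)
                    (hdash i₀ i hi₀1 (by omega) (by omega)) hedge
        have hdash' : ∀ i j, 1 ≤ i → i ≤ j → j ≤ n →
            DashedTo K (sub2 (s i) (s (min i i₀)) (s (max i (i₀+1))))
              (sub2 (s j) (s (min j i₀)) (s (max j (i₀+1)))) := by
          intro i j h1 h2 h3
          exact dash_transfer (hdash i j h1 h2 h3)
            (hdash (min i i₀) (min j i₀) (by omega) (by omega) (by omega))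
            (hdash (min i i₀) (max j (i₀+1)) (by omega) (by omega) (by omega))
            (hdash (max i (i₀+1)) (max j (i₀+1)) (by omega) (by omega) (by omega))
        exact ih (fun i => if i = i₀ then g i₀ else f i)
          (fun j => sub2 (s j) (s (min j i₀)) (s (max j (i₀+1))))
          hcard' hfg' hreal' hdash'
      · refine ⟨s, hreal.1, hreal.2.1, ?_⟩
        intro i hi1 hi2
        by_cases hf : f i = ArrowType.left
        · have hg : g i = ArrowType.left := by
            by_contra hg
            exact hex ⟨i, ⟨hi1, hi2⟩, hf, hg⟩
          have hge : g i = f i := by rw [hg, hf]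
          rw [hge]; exact hreal.2.2 i hi1 hi2
        · rw [hfg i hi1 hi2 hf]; exact hreal.2.2 i hi1 hi2

/-- if a pattern path is realized with all dashed right arrows
between its vertices, then any set of its solid left arrows can be turned into
solid right arrows. -/
theorem turn_left_arrows_right {S : Sgn} (K : Set (Alg S)) (hid : IdemK K)
    (n : ℕ) (hn : 2 ≤ n) (f g : ℕ → ArrowType)
    (hfg : ∀ i, 1 ≤ i → i < n → f i ≠ ArrowType.left → g i = f i)
    (h : ∃ s : ℕ → T2 S, RealizesWith K f n s ∧
      ∀ i j, 1 ≤ i → i ≤ j → j ≤ n → DashedTo K (s i) (s j)) :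
    ∃ s : ℕ → T2 S, RealizesWith K g n s := by
  obtain ⟨s, hreal, hdash⟩ := h
  exact turn_aux K hid n g
    (((Finset.Ico 1 n).filter
      (fun i => f i = ArrowType.left ∧ g i ≠ ArrowType.left)).card) f s le_rfl hfg hreal hdash
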